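/- Let V be a nonempty finite set of natural numbers whose maximum d = max V satisfies d ≥ 1, and let c : ℕ → ℝ assign a strictly positive coefficient c_q > 0 to each q ∈ V. Define f : ℕ → ℝ by f(N) = ∑_{q ∈ V} c_q · C(N, q). Then there exists a natural number N₀ such that for all N ≥ max(N₀, 1), f(N)² ≥ f(N−1)·f(N+1); that is, f is eventually logarithmically concave. -/
import Mathlib

open Polynomial Filter

/-- A real polynomial with positive leading coefficient is eventually positive. -/
lemma auxEventuallyPos (Q : Polynomial ℝ) (h : 0 < Q.leadingCoeff) :
    ∀ᶠ x in atTop, 0 < Q.eval x := by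
  rcases le_or_gt Q.degree 0 with hdeg | hdeg
  · have hQ := Polynomial.eq_C_of_degree_le_zero hdeg
    rw [hQ, Polynomial.leadingCoeff_C] at h
    filter_upwards with x
    rw [hQ, Polynomial.eval_C]
    exact h
  · exact (Polynomial.tendsto_atTop_of_leadingCoeff_nonneg Q hdeg h.le).eventually_gt_atTop 0

/-- A positive linear combination of binomial coefficients `f(N) = ∑_{q ∈ V} c_q C(N, q)`
with `max V ≥ 1` is eventually logarithmically concave:
`f(N-1) f(N+1) ≤ f(N)²` for all sufficiently large `N`. -/
theorem stmt9 (V : Finset ℕ) (hV : V.Nonempty) (d : ℕ) (hd : d = V.max' hV) (hd1 : 1 ≤ d)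
    (c : ℕ → ℝ) (hc : ∀ q ∈ V, 0 < c q)
    (f : ℕ → ℝ) (hf : f = fun N => ∑ q ∈ V, c q * (N.choose q : ℝ)) :
    ∃ N₀ : ℕ, ∀ N : ℕ, max N₀ 1 ≤ N → f (N - 1) * f (N + 1) ≤ f N ^ 2 := by
  have hdV : d ∈ V := hd ▸ V.max'_mem hV
  have hle : ∀ q ∈ V, q ≤ d := fun q hq => hd ▸ V.le_max' q hq
  set a : ℝ := c d / d.factorial with ha_def
  have ha : 0 < a := div_pos (hc d hdV) (by positivity)
  -- the polynomial interpolating f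
  set P : Polynomial ℝ := ∑ q ∈ V, Polynomial.C (c q / q.factorial) * descPochhammer ℝ q
    with hP_def
  have hPeval : ∀ N : ℕ, P.eval (N : ℝ) = f N := by
    intro N
    rw [hP_def, hf, Polynomial.eval_finset_sum]
    refine Finset.sum_congr rfl fun q hq => ?_
    rw [Polynomial.eval_mul, Polynomial.eval_C,
      descPochhammer_eval_eq_descFactorial ℝ N q,
      Nat.descFactorial_eq_factorial_mul_choose, Nat.cast_mul]
    have hq0 : (q.factorial : ℝ) ≠ 0 := by positivity
    field_simp
  have hPdegle : P.natDegree ≤ d := by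
    refine Polynomial.natDegree_sum_le_of_forall_le _ _ fun q hq => ?_
    exact (Polynomial.natDegree_C_mul_le _ _).trans
      (le_trans (le_of_eq (descPochhammer_natDegree ℝ q)) (hle q hq))
  have hPd : P.coeff d = a := by
    rw [hP_def, Polynomial.finset_sum_coeff]
    rw [Finset.sum_eq_single d]
    · rw [Polynomial.coeff_C_mul]
      have h1 : (descPochhammer ℝ d).coeff d = 1 := by
        have h2 := (monic_descPochhammer ℝ d).coeff_natDegree
        rwa [descPochhammer_natDegree] at h2
      rw [h1, mul_one]
    · intro q hq hqd
      rw [Polynomial.coeff_C_mul,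
        Polynomial.coeff_eq_zero_of_natDegree_lt, mul_zero]
      rw [descPochhammer_natDegree]
      exact lt_of_le_of_ne (hle q hq) hqd
    · intro h; exact absurd hdV h
  have hPnd : P.natDegree = d :=
    le_antisymm hPdegle (Polynomial.le_natDegree_of_ne_zero (by rw [hPd]; exact ha.ne'))
  have hPlead : 0 < P.leadingCoeff := by
    rw [Polynomial.leadingCoeff, hPnd, hPd]; exact ha
  -- derivatives
  set A1 : Polynomial ℝ := Polynomial.derivative P with hA1_def
  set A2 : Polynomial ℝ := Polynomial.derivative A1 with hA2_def
  have hA1deg : A1.natDegree ≤ d - 1 := by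
    rw [hA1_def]
    exact (Polynomial.natDegree_derivative_le P).trans (by rw [hPnd])
  have hA1c : A1.coeff (d - 1) = a * d := by
    rw [hA1_def, Polynomial.coeff_derivative]
    have h1 : d - 1 + 1 = d := Nat.succ_pred_eq_of_pos hd1
    rw [h1, hPd, Nat.cast_sub hd1]
    push_cast
    ring
  -- the key polynomial G = P'^2 - P * P''
  set G : Polynomial ℝ := A1 * A1 - P * A2 with hG_def
  have hGc : G.coeff (2 * (d - 1)) = a ^ 2 * d ∧ G.natDegree ≤ 2 * (d - 1) := by
    rcases eq_or_lt_of_le hd1 with hd1' | hd2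
    · -- d = 1
      have hd1'' : d = 1 := hd1'.symm
      subst hd1''
      have hA1nd : A1.natDegree = 0 := le_antisymm (by simpa using hA1deg) (Nat.zero_le _)
      have hA2z : A2 = 0 := by
        rw [hA2_def, Polynomial.eq_C_of_natDegree_eq_zero hA1nd]
        simp
      constructor
      · rw [hG_def, hA2z, mul_zero, sub_zero]
        simp only [Nat.sub_self, mul_zero, Polynomial.mul_coeff_zero]
        have h3 := hA1c
        simp only [Nat.sub_self] at h3
        rw [h3]
        push_cast
        ring
      · rw [hG_def, hA2z, mul_zero, sub_zero]
        simpa using Polynomial.natDegree_mul_le.trans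
          (add_le_add hA1nd.le hA1nd.le)
    · -- d ≥ 2
      have hd2' : 2 ≤ d := hd2
      have hA2deg : A2.natDegree ≤ d - 2 := by
        have h4 : A2.natDegree ≤ A1.natDegree - 1 := by
          rw [hA2_def]; exact Polynomial.natDegree_derivative_le A1
        omega
      have hA2c : A2.coeff (d - 2) = a * d * ((d - 1 : ℕ) : ℝ) := by
        rw [hA2_def, Polynomial.coeff_derivative]
        have h5 : d - 2 + 1 = d - 1 := by omega
        rw [h5, hA1c, Nat.cast_sub hd2', Nat.cast_sub hd1]
        push_cast
        ring
      have h11 : (A1 * A1).coeff ((d - 1) + (d - 1)) = A1.coeff (d - 1) * A1.coeff (d - 1) :=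
        Polynomial.coeff_mul_add_eq_of_natDegree_le hA1deg hA1deg
      have h02 : (P * A2).coeff (d + (d - 2)) = P.coeff d * A2.coeff (d - 2) :=
        Polynomial.coeff_mul_add_eq_of_natDegree_le hPnd.le hA2deg
      have hi1 : 2 * (d - 1) = (d - 1) + (d - 1) := by omega
      have hi2 : 2 * (d - 1) = d + (d - 2) := by omega
      constructor
      · rw [hG_def, Polynomial.coeff_sub]
        rw [hi1, h11, hA1c, ← hi1, hi2, h02, hPd, hA2c]
        have hcast : ((d - 1 : ℕ) : ℝ) = (d : ℝ) - 1 := by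
          rw [Nat.cast_sub hd1]; norm_num
        rw [hcast]
        ring
      · rw [hG_def]
        refine (Polynomial.natDegree_sub_le _ _).trans (max_le ?_ ?_)
        · exact Polynomial.natDegree_mul_le.trans (by rw [hi1]; exact add_le_add hA1deg hA1deg)
        · exact Polynomial.natDegree_mul_le.trans (by rw [hi2]; exact add_le_add hPnd.le hA2deg)
  have hdR : (0 : ℝ) < d := by exact_mod_cast hd1
  have hGnd : G.natDegree = 2 * (d - 1) :=
    le_antisymm hGc.2 (Polynomial.le_natDegree_of_ne_zero
      (by rw [hGc.1]; positivity))
  have hGlead : 0 < G.leadingCoeff := by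
    rw [Polynomial.leadingCoeff, hGnd, hGc.1]; positivity
  -- eventual positivity
  obtain ⟨s, hs⟩ := eventually_atTop.mp
    ((auxEventuallyPos P hPlead).and (auxEventuallyPos G hGlead))
  -- log-concavity of eval P on [s, ∞)
  have hconc : ConcaveOn ℝ (Set.Ici s) (fun x => Real.log (P.eval x)) := by
    refine concaveOn_of_hasDerivWithinAt2_nonpos (f' := fun x => A1.eval x / P.eval x)
      (f'' := fun x => (A2.eval x * P.eval x - A1.eval x * A1.eval x) / (P.eval x) ^ 2)
      (convex_Ici s) ?_ ?_ ?_ ?_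
    · exact ContinuousOn.log (P.continuous_aeval).continuousOn
        fun x hx => (hs x hx).1.ne'
    · intro x hx
      rw [interior_Ici] at hx
      have hx' : s ≤ x := le_of_lt hx
      have hP' : HasDerivAt (fun y => P.eval y) (A1.eval x) x := by
        rw [hA1_def]; exact P.hasDerivAt x
      exact (hP'.log (hs x hx').1.ne').hasDerivWithinAt
    · intro x hx
      rw [interior_Ici] at hx
      have hx' : s ≤ x := le_of_lt hx
      have hA1' : HasDerivAt (fun y => A1.eval y) (A2.eval x) x := by
        rw [hA2_def]; exact A1.hasDerivAt x
      have hP' : HasDerivAt (fun y => P.eval y) (A1.eval x) x := by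
        rw [hA1_def]; exact P.hasDerivAt x
      exact (hA1'.div hP' (hs x hx').1.ne').hasDerivWithinAt
    · intro x hx
      rw [interior_Ici] at hx
      have hx' : s ≤ x := le_of_lt hx
      apply div_nonpos_of_nonpos_of_nonneg
      · have hGx := (hs x hx').2
        rw [hG_def] at hGx
        simp only [Polynomial.eval_sub, Polynomial.eval_mul] at hGx
        nlinarith [hGx]
      · positivity
  -- conclusion
  refine ⟨⌈s⌉₊ + 2, fun N hN => ?_⟩
  have hN1 : 1 ≤ N := le_trans (le_max_right _ _) hN
  have hN0 : ⌈s⌉₊ + 2 ≤ N := le_trans (le_max_left _ _) hN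
  have hceil : s ≤ (⌈s⌉₊ : ℝ) := Nat.le_ceil s
  have hNR : ((⌈s⌉₊ : ℝ) + 2) ≤ (N : ℝ) := by exact_mod_cast hN0
  have hx1 : s ≤ (N : ℝ) - 1 := by linarith
  have hxN : s ≤ (N : ℝ) := by linarith
  have hx2 : s ≤ (N : ℝ) + 1 := by linarith
  have p1 : 0 < P.eval ((N : ℝ) - 1) := (hs _ hx1).1
  have pN : 0 < P.eval (N : ℝ) := (hs _ hxN).1
  have p2 : 0 < P.eval ((N : ℝ) + 1) := (hs _ hx2).1
  have hkey := hconc.2 (Set.mem_Ici.mpr hx1) (Set.mem_Ici.mpr hx2)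
    (by norm_num : (0 : ℝ) ≤ 1 / 2) (by norm_num : (0 : ℝ) ≤ 1 / 2) (by norm_num)
  have hmid : (1 / 2 : ℝ) • ((N : ℝ) - 1) + (1 / 2 : ℝ) • ((N : ℝ) + 1) = (N : ℝ) := by
    simp only [smul_eq_mul]; ring
  rw [hmid] at hkey
  simp only [smul_eq_mul] at hkey
  have hlog : Real.log (P.eval ((N : ℝ) - 1) * P.eval ((N : ℝ) + 1))
      ≤ Real.log ((P.eval (N : ℝ)) ^ 2) := by
    rw [Real.log_mul p1.ne' p2.ne', Real.log_pow]
    push_cast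
    linarith
  have hineq : P.eval ((N : ℝ) - 1) * P.eval ((N : ℝ) + 1) ≤ (P.eval (N : ℝ)) ^ 2 :=
    (Real.log_le_log_iff (by positivity) (by positivity)).mp hlog
  have hc1 : ((N - 1 : ℕ) : ℝ) = (N : ℝ) - 1 := by
    rw [Nat.cast_sub hN1]; norm_num
  have hc2 : ((N + 1 : ℕ) : ℝ) = (N : ℝ) + 1 := by push_cast; ring
  rw [← hPeval (N - 1), ← hPeval (N + 1), ← hPeval N, hc1, hc2]
  exact hineq
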